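/- Let q ∈ (2, 4) and let u ∈ L^q(ℝ²) be radially symmetric with profile f. Then for every x ∈ ℝ² \ {0} the integral V_u(x) = ∫_{|x|}^{+∞} (h_u(s)/s) f(s)² ds is finite, i.e. the function s ↦ (h_u(s)/s) f(s)² is integrable on (|x|, +∞); hence V_u is well defined on ℝ² \ {0}. -/

import Mathlib

open MeasureTheory Real Filter
open scoped ENNReal NNReal

noncomputable section

abbrev E2 : Type := EuclideanSpace ℝ (Fin 2)

/-- `h_u(r) = (1/(4π)) ∫_{B_r(0)} u²`. -/
def hfun (u : E2 → ℝ) (r : ℝ) : ℝ :=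
  (1 / (4 * Real.pi)) * ∫ y in Metric.ball (0 : E2) r, (u y) ^ 2

/-- radial symmetry -/
def IsRadial (u : E2 → ℝ) : Prop := ∀ x y : E2, ‖x‖ = ‖y‖ → u x = u y

/-- `u` is radially symmetric with profile `f` -/
def HasProfile (u : E2 → ℝ) (f : ℝ → ℝ) : Prop := ∀ x : E2, u x = f ‖x‖

/-- `g` is the distributional gradient of `u` -/
def IsDistribGrad (u : E2 → ℝ) (g : E2 → E2) : Prop :=
  ∀ φ : E2 → ℝ, ContDiff ℝ (⊤ : ℕ∞) φ → HasCompactSupport φ →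
    ∫ x, u x • gradient φ x = - ∫ x, φ x • g x

/-- `u ∈ W^{2,4}(ℝ²)` with distributional gradient `g` -/
def MemW24 (u : E2 → ℝ) (g : E2 → E2) : Prop :=
  MemLp u 4 (volume : Measure E2) ∧ MemLp g 2 (volume : Measure E2) ∧ IsDistribGrad u g

/-- `‖u‖_{2,4} = ‖∇u‖₂ + ‖u‖₄` -/
def norm24 (u : E2 → ℝ) (g : E2 → E2) : ℝ :=
  (eLpNorm g 2 (volume : Measure E2)).toReal + (eLpNorm u 4 (volume : Measure E2)).toReal

open Classical in
/-- `U_u(x) = h_u(|x|)²/|x|²`, `U_u(0) = 0` -/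
def Ufun (u : E2 → ℝ) (x : E2) : ℝ :=
  if x = 0 then 0 else (hfun u ‖x‖) ^ 2 / ‖x‖ ^ 2

/-- `V_u(x) = ∫_{|x|}^∞ (h_u(s)/s) f(s)² ds` -/
def Vfun (u : E2 → ℝ) (f : ℝ → ℝ) (x : E2) : ℝ :=
  ∫ s in Set.Ioi ‖x‖, (hfun u s / s) * (f s) ^ 2

/-- the Laplacian as the trace of the second derivative -/
def lap (u : E2 → ℝ) (x : E2) : ℝ :=
  ∑ i : Fin 2,
    fderiv ℝ (fun y => fderiv ℝ u y (EuclideanSpace.single i (1:ℝ))) x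
      (EuclideanSpace.single i (1:ℝ))

/-- finite energy: `∫ U_u u² < ∞` and `u ∈ L^{p+1}` -/
def FiniteEnergy (p : ℝ) (u : E2 → ℝ) : Prop :=
  Integrable (fun x => Ufun u x * (u x) ^ 2) (volume : Measure E2) ∧
  Integrable (fun x => |u x| ^ (p + 1)) (volume : Measure E2)

/-- the energy `E(u)` (`g` stands for `∇u`) -/
def energy (p : ℝ) (u : E2 → ℝ) (g : E2 → E2) : ℝ :=
  (1 / 2) * ((eLpNorm g 2 (volume : Measure E2)).toReal) ^ 2
    + (1 / 2) * ∫ x, Ufun u x * (u x) ^ 2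
    - (1 / (p + 1)) * ∫ x, |u x| ^ (p + 1)

/-- classical solution of problem (P) -/
def IsClassicalSolution (p : ℝ) (u : E2 → ℝ) (f : ℝ → ℝ) : Prop :=
  HasProfile u f ∧ ContDiff ℝ 2 u ∧ Continuous (Ufun u) ∧
  (∀ x : E2, IntegrableOn (fun s => (hfun u s / s) * (f s) ^ 2) (Set.Ioi ‖x‖) volume) ∧
  Continuous (Vfun u f) ∧
  (∀ x : E2, -lap u x + (Ufun u x + Vfun u f x) * u x = |u x| ^ (p - 1) * u x) ∧
  Tendsto u (cocompact E2) (nhds 0)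

/-- `v ∈ H¹(ℝ²)` with distributional gradient `gv` -/
def MemH1 (v : E2 → ℝ) (gv : E2 → E2) : Prop :=
  MemLp v 2 (volume : Measure E2) ∧ MemLp gv 2 (volume : Measure E2) ∧ IsDistribGrad v gv

/-- weak solution of problem (P) -/
def IsWeakSolution (p : ℝ) (u : E2 → ℝ) (f : ℝ → ℝ) (g : E2 → E2) : Prop :=
  ∀ v gv, MemH1 v gv →
    (∫ x, (inner ℝ (g x) (gv x) : ℝ)) + (∫ x, Ufun u x * u x * v x)
      + (∫ x, Vfun u f x * u x * v x) = ∫ x, |u x| ^ (p - 1) * u x * v x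

/-- the set `S` of nontrivial finite-energy classical solutions lying in `W_r^{2,4}` -/
def InS (p : ℝ) (u : E2 → ℝ) (f : ℝ → ℝ) (g : E2 → E2) : Prop :=
  MemW24 u g ∧ IsClassicalSolution p u f ∧ FiniteEnergy p u ∧ u ≠ 0

open Set Metric

lemma hfun_nonneg (u : E2 → ℝ) (s : ℝ) : 0 ≤ hfun u s := by
  unfold hfun
  have h1 : (0:ℝ) ≤ 1 / (4 * Real.pi) := by positivity
  exact mul_nonneg h1 (integral_nonneg fun y => sq_nonneg _)

lemma hfun_measurable {q : ℝ} (hq : 2 ≤ q) (u : E2 → ℝ)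
    (hu : MemLp u (ENNReal.ofReal q) volume) : Measurable (hfun u) := by
  have h2q : (2 : ℝ≥0∞) ≤ ENNReal.ofReal q := by
    rw [show (2:ℝ≥0∞) = ENNReal.ofReal 2 by simp]
    exact ENNReal.ofReal_le_ofReal hq
  have hball : ∀ r : ℝ, IntegrableOn (fun y => u y ^ 2) (Metric.ball (0:E2) r) volume := by
    intro r
    haveI : IsFiniteMeasure (volume.restrict (Metric.ball (0:E2) r)) :=
      ⟨by rw [Measure.restrict_apply_univ]; exact measure_ball_lt_top⟩
    exact ((hu.restrict _).mono_exponent h2q).integrable_sq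
  have hmono : Monotone fun r => ∫ y in Metric.ball (0:E2) r, u y ^ 2 := by
    intro r₁ r₂ h
    exact setIntegral_mono_set (hball r₂)
      (Filter.Eventually.of_forall fun y => sq_nonneg _)
      (HasSubset.Subset.eventuallyLE (Metric.ball_subset_ball h))
  exact measurable_const.mul hmono.measurable

lemma lq_lintegral_lt_top {q : ℝ} (hq0 : 0 < q) (u : E2 → ℝ)
    (hu : MemLp u (ENNReal.ofReal q) volume) :
    (∫⁻ x, (‖u x‖₊ : ℝ≥0∞) ^ q ∂(volume : Measure E2)) < ⊤ := by
  have h1 := hu.2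
  rw [eLpNorm_eq_lintegral_rpow_enorm_toReal
      (by simp [ENNReal.ofReal_eq_zero]; linarith) ENNReal.ofReal_ne_top,
    ENNReal.toReal_ofReal hq0.le] at h1
  exact (ENNReal.rpow_lt_top_iff_of_pos (by positivity)).mp h1

lemma ofReal_sq_eq (a : ℝ) : ENNReal.ofReal (a ^ 2) = (‖a‖₊ : ℝ≥0∞) ^ (2:ℝ) := by
  rw [← sq_abs, ← Real.norm_eq_abs, ← Real.rpow_natCast ‖a‖ 2,
    ← ENNReal.ofReal_rpow_of_nonneg (norm_nonneg _) (by norm_num),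
    ofReal_norm, enorm_eq_nnnorm, ENNReal.rpow_natCast]
  norm_num

lemma hfun_bound {q : ℝ} (hq2 : 2 < q) (u : E2 → ℝ)
    (hu : MemLp u (ENNReal.ofReal q) volume) :
    ∃ D : ℝ≥0∞, D ≠ ⊤ ∧ ∀ s : ℝ, 0 < s →
      ENNReal.ofReal (hfun u s) ≤ D * ENNReal.ofReal (s ^ (2 - 4 / q)) := by
  have hq0 : 0 < q := by linarith
  set A : ℝ≥0∞ := ∫⁻ x, (‖u x‖₊ : ℝ≥0∞) ^ q ∂(volume : Measure E2) with hA
  have hAlt : A < ⊤ := lq_lintegral_lt_top hq0 u hu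
  set B : ℝ≥0∞ := volume (Metric.ball (0:E2) 1) with hB
  have hBlt : B ≠ ⊤ := measure_ball_lt_top.ne
  refine ⟨ENNReal.ofReal (1 / (4 * Real.pi)) * A ^ (2 / q) * B ^ ((q - 2) / q), ?_, ?_⟩
  · exact ENNReal.mul_ne_top (ENNReal.mul_ne_top ENNReal.ofReal_ne_top
      (ENNReal.rpow_lt_top_of_nonneg (by positivity) hAlt.ne).ne)
      (ENNReal.rpow_lt_top_of_nonneg (div_nonneg (by linarith) hq0.le) hBlt).ne
  intro s hs
  set μs := (volume : Measure E2).restrict (Metric.ball (0:E2) s) with hμs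
  have husm : AEStronglyMeasurable u μs := hu.1.restrict
  have hint : ∫ y in Metric.ball (0:E2) s, u y ^ 2
      = (∫⁻ y in Metric.ball (0:E2) s, ENNReal.ofReal (u y ^ 2)).toReal :=
    integral_eq_lintegral_of_nonneg_ae (Filter.Eventually.of_forall fun y => sq_nonneg _)
      ((husm.aemeasurable.pow_const 2).aestronglyMeasurable)
  -- Hölder
  have hconj : ((q/2) : ℝ).HolderConjugate (q/(q-2)) := by
    rw [Real.holderConjugate_iff]
    constructor
    · linarith
    · rw [inv_div, inv_div]
      field_simp
      ring
  have hχm : AEMeasurable (fun y => (‖u y‖₊ : ℝ≥0∞) ^ (2:ℝ)) μs :=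
    ENNReal.continuous_rpow_const.measurable.comp_aemeasurable husm.aemeasurable.enorm
  have hHold := ENNReal.lintegral_mul_le_Lp_mul_Lq μs hconj hχm (aemeasurable_const (b := (1:ℝ≥0∞)))
  simp only [Pi.mul_apply, mul_one, ENNReal.one_rpow] at hHold
  have key : (∫⁻ y in Metric.ball (0:E2) s, ENNReal.ofReal (u y ^ 2))
      ≤ A ^ (2/q) * (ENNReal.ofReal (s ^ (2:ℕ)) * B) ^ ((q-2)/q) := by
    calc ∫⁻ y, ENNReal.ofReal (u y ^ 2) ∂μs
        = ∫⁻ y, (‖u y‖₊ : ℝ≥0∞) ^ (2:ℝ) ∂μs := lintegral_congr fun y => ofReal_sq_eq (u y)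
      _ ≤ (∫⁻ y, ((‖u y‖₊ : ℝ≥0∞) ^ (2:ℝ)) ^ (q/2) ∂μs) ^ (1/(q/2))
            * (∫⁻ _, (1:ℝ≥0∞) ∂μs) ^ (1/(q/(q-2))) := hHold
      _ ≤ A ^ (2/q) * (ENNReal.ofReal (s ^ (2:ℕ)) * B) ^ ((q-2)/q) := by
          rw [one_div, one_div, inv_div, inv_div]
          gcongr ?_ * ?_
          · refine ENNReal.rpow_le_rpow ?_ (by positivity)
            calc ∫⁻ y, ((‖u y‖₊ : ℝ≥0∞) ^ (2:ℝ)) ^ (q/2) ∂μs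
                = ∫⁻ y, (‖u y‖₊ : ℝ≥0∞) ^ q ∂μs := by
                  refine lintegral_congr fun y => ?_
                  rw [← ENNReal.rpow_mul]
                  norm_num
                  rw [mul_div_cancel₀ _ (two_ne_zero)]
              _ ≤ A := setLIntegral_le_lintegral _ _
          · refine le_of_eq ?_
            congr 1
            rw [lintegral_one, Measure.restrict_apply_univ,
              Measure.addHaar_ball volume 0 hs.le, finrank_euclideanSpace_fin]
  -- conclude
  have h1 : ENNReal.ofReal (hfun u s)
      = ENNReal.ofReal (1 / (4 * Real.pi)) *
        ENNReal.ofReal (∫ y in Metric.ball (0:E2) s, u y ^ 2) := by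
    unfold hfun
    rw [ENNReal.ofReal_mul (by positivity)]
  have h2 : ENNReal.ofReal (∫ y in Metric.ball (0:E2) s, u y ^ 2)
      ≤ A ^ (2/q) * (ENNReal.ofReal (s ^ (2:ℕ)) * B) ^ ((q-2)/q) := by
    rw [hint]
    exact le_trans ENNReal.ofReal_toReal_le key
  have h3 : (ENNReal.ofReal (s ^ (2:ℕ)) * B) ^ ((q-2)/q)
      = ENNReal.ofReal (s ^ (2 - 4/q)) * B ^ ((q-2)/q) := by
    rw [ENNReal.mul_rpow_of_nonneg _ _ (div_nonneg (by linarith) hq0.le),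
      ENNReal.ofReal_rpow_of_nonneg (by positivity) (div_nonneg (by linarith) hq0.le)]
    congr 2
    rw [← Real.rpow_natCast s 2, ← Real.rpow_mul hs.le]
    congr 1
    field_simp
    ring
  calc ENNReal.ofReal (hfun u s)
      ≤ ENNReal.ofReal (1 / (4 * Real.pi)) *
        (A ^ (2/q) * (ENNReal.ofReal (s ^ (2 - 4/q)) * B ^ ((q-2)/q))) := by
        rw [h1, ← h3]
        exact mul_le_mul_right h2 _
    _ = ENNReal.ofReal (1 / (4 * Real.pi)) * A ^ (2 / q) * B ^ ((q - 2) / q)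
        * ENNReal.ofReal (s ^ (2 - 4 / q)) := by ring

lemma profile_facts {q : ℝ} (hq0 : 0 < q) (u : E2 → ℝ) (f : ℝ → ℝ)
    (hu : MemLp u (ENNReal.ofReal q) volume) (hprof : HasProfile u f) :
    AEMeasurable (fun s => ENNReal.ofReal (f s ^ 2)) (volume.restrict (Ioi (0:ℝ))) ∧
    (∫⁻ s in Ioi (0:ℝ), ENNReal.ofReal s * ENNReal.ofReal (f s ^ 2) ^ (q / 2)) < ⊤ := by
  have hAlt := lq_lintegral_lt_top hq0 u hu
  set σ := (volume : Measure E2).toSphere with hσ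
  have hdim : Module.finrank ℝ E2 = 2 := finrank_euclideanSpace_fin
  set ν := Measure.volumeIoiPow (Module.finrank ℝ E2 - 1) with hν
  set μc := Measure.comap (Subtype.val : ({(0:E2)}ᶜ : Set E2) → E2) volume with hμc
  set T := homeomorphUnitSphereProd E2 with hT
  set g : ↥(Metric.sphere (0:E2) 1) × ↥(Ioi (0:ℝ)) → ℝ≥0∞ :=
    fun z => ENNReal.ofReal (f z.2.1 ^ 2) ^ (q/2) with hg
  -- key pointwise identity
  have hgT : ∀ z : ({(0:E2)}ᶜ : Set E2), g (T z) = (‖u z.1‖₊ : ℝ≥0∞) ^ q := by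
    intro z
    have h2 : ((T z).2 : ℝ) = ‖z.1‖ := by simp [hT]
    show ENNReal.ofReal (f ((T z).2 : ℝ) ^ 2) ^ (q/2) = _
    rw [h2, ← hprof z.1, ofReal_sq_eq, ← ENNReal.rpow_mul]
    congr 1
    field_simp
  have hmap := (Measure.measurePreserving_homeomorphUnitSphereProd
    (volume : Measure E2)).map_eq
  -- total integral of g
  have hA' : ∫⁻ z, g z ∂(σ.prod ν) = ∫⁻ x, (‖u x‖₊ : ℝ≥0∞) ^ q ∂(volume : Measure E2) := by
    rw [← hmap, (Homeomorph.measurableEmbedding T).lintegral_map g]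
    calc ∫⁻ z, g (T z) ∂μc = ∫⁻ z : ({(0:E2)}ᶜ : Set E2), (‖u z.1‖₊ : ℝ≥0∞) ^ q ∂μc :=
          lintegral_congr hgT
      _ = ∫⁻ x in {(0:E2)}ᶜ, (‖u x‖₊ : ℝ≥0∞) ^ q ∂(volume : Measure E2) := by
          have := setLIntegral_subtype (μ := (volume : Measure E2)) (measurableSet_singleton (0:E2)).compl univ
            (fun x => (‖u x‖₊ : ℝ≥0∞) ^ q)
          rwa [Measure.restrict_univ, Subtype.coe_image_univ] at this
      _ = _ := by rw [MeasureTheory.restrict_compl_singleton]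
  have hglt : (∫⁻ z, g z ∂(σ.prod ν)) < ⊤ := by rw [hA']; exact hAlt
  -- AEMeasurability of g w.r.t. product
  have hucomp : AEMeasurable (fun z : ({(0:E2)}ᶜ : Set E2) => (‖u z.1‖₊ : ℝ≥0∞) ^ q) μc := by
    have h1 : AEMeasurable (fun x : E2 => (‖u x‖₊ : ℝ≥0∞) ^ q)
        ((volume : Measure E2).restrict {(0:E2)}ᶜ) :=
      ENNReal.continuous_rpow_const.measurable.comp_aemeasurable
        hu.1.restrict.aemeasurable.enorm
    rw [← map_comap_subtype_coe (measurableSet_singleton (0:E2)).compl volume] at h1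
    exact (MeasurableEmbedding.subtype_coe
      (measurableSet_singleton (0:E2)).compl).aemeasurable_map_iff.mp h1
  have hgaem : AEMeasurable g (σ.prod ν) := by
    rw [← hmap]
    rw [(Homeomorph.measurableEmbedding T).aemeasurable_map_iff]
    exact hucomp.congr (ae_of_all _ fun z => (hgT z).symm)
  -- σ is nonzero finite
  have hσuniv : σ univ = 2 * volume (Metric.ball (0:E2) 1) := by
    rw [hσ, Measure.toSphere_apply_univ, hdim]; norm_num
  have hσ0 : σ univ ≠ 0 := by
    rw [hσuniv]
    exact mul_ne_zero two_ne_zero (measure_ball_pos volume 0 one_pos).ne'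
  -- iterated integral
  set c₀ := ∫⁻ r : ↥(Ioi (0:ℝ)), ENNReal.ofReal (f r.1 ^ 2) ^ (q/2) ∂ν with hc₀
  have hiter : ∫⁻ z, g z ∂(σ.prod ν) = c₀ * σ univ := by
    rw [lintegral_prod g hgaem]
    simp only [hg]
    rw [lintegral_const]
  have hc₀lt : c₀ < ⊤ := by
    by_contra h
    rw [not_lt, top_le_iff] at h
    rw [hiter, h, ENNReal.top_mul hσ0] at hglt
    exact (lt_irrefl _) hglt
  -- slice AEMeasurability
  have hslice : AEMeasurable (fun r : ↥(Ioi (0:ℝ)) => ENNReal.ofReal (f r.1 ^ 2) ^ (q/2)) ν := by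
    obtain ⟨G, hGmeas, hGae⟩ := hgaem
    have h1 := Measure.ae_ae_of_ae_prod hGae
    have hne : (ae σ).NeBot := ae_neBot.mpr (fun h => hσ0 (by rw [h]; simp))
    obtain ⟨ω, hω⟩ := h1.exists
    exact ⟨fun r => G (ω, r), hGmeas.comp measurable_prodMk_left, hω⟩
  -- unfold ν as withDensity
  have hν1 : ν = Measure.withDensity
      (Measure.comap Subtype.val (volume : Measure ℝ)) (fun r : ↥(Ioi (0:ℝ)) =>
        ENNReal.ofReal (r.1 ^ 1)) := by
    rw [hν, hdim]; rfl
  have hdens_meas : Measurable (fun r : ↥(Ioi (0:ℝ)) => (Real.toNNReal (r.1 ^ 1) : ℝ≥0)) :=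
    (measurable_subtype_coe.pow_const 1).real_toNNReal
  -- measurability transferred to comap measure
  have hms : AEMeasurable (fun r : ↥(Ioi (0:ℝ)) => ENNReal.ofReal (f r.1 ^ 2) ^ (q/2))
      (Measure.comap Subtype.val (volume : Measure ℝ)) := by
    rw [hν1] at hslice
    have h2 := (aemeasurable_withDensity_ennreal_iff hdens_meas).mp hslice
    have h3 : Measurable (fun r : ↥(Ioi (0:ℝ)) => (ENNReal.ofReal r.1)⁻¹) :=
      (ENNReal.measurable_ofReal.comp measurable_subtype_coe).inv
    refine (h3.aemeasurable.mul h2).congr (ae_of_all _ fun r => ?_)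
    show (ENNReal.ofReal r.1)⁻¹ * ((Real.toNNReal (r.1 ^ 1) : ℝ≥0∞) * _) = _
    rw [pow_one, ← mul_assoc, show ((Real.toNNReal r.1 : ℝ≥0) : ℝ≥0∞) = ENNReal.ofReal r.1 from rfl,
      ENNReal.inv_mul_cancel (ENNReal.ofReal_pos.mpr r.2).ne' ENNReal.ofReal_ne_top, one_mul]
  -- to the real line
  have hFm : AEMeasurable (fun s : ℝ => ENNReal.ofReal (f s ^ 2) ^ (q/2))
      (volume.restrict (Ioi (0:ℝ))) := by
    rw [← map_comap_subtype_coe measurableSet_Ioi volume]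
    exact (MeasurableEmbedding.subtype_coe measurableSet_Ioi).aemeasurable_map_iff.mpr hms
  constructor
  · refine ((ENNReal.continuous_rpow_const (y := 2/q)).measurable.comp_aemeasurable hFm).congr
      (ae_of_all _ fun s => ?_)
    show (ENNReal.ofReal (f s ^ 2) ^ (q/2)) ^ (2/q) = _
    rw [← ENNReal.rpow_mul]
    rw [show q/2 * (2/q) = 1 by field_simp]
    exact ENNReal.rpow_one _
  · -- rewrite c₀ as integral over Ioi 0 w.r.t. Lebesgue
    have hc0' : (∫⁻ s in Ioi (0:ℝ), ENNReal.ofReal s * ENNReal.ofReal (f s ^ 2) ^ (q / 2)) = c₀ := by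
      rw [hc₀, hν1, lintegral_withDensity_eq_lintegral_mul_non_measurable _
        ((measurable_subtype_coe.pow_const 1).ennreal_ofReal)
        (ae_of_all _ fun r => ENNReal.ofReal_lt_top) _]
      have := setLIntegral_subtype (μ := (volume : Measure ℝ)) (measurableSet_Ioi (a := (0:ℝ))) univ
        (fun s : ℝ => ENNReal.ofReal s * ENNReal.ofReal (f s ^ 2) ^ (q / 2))
      rw [Measure.restrict_univ, Subtype.coe_image_univ] at this
      rw [← this]
      refine lintegral_congr fun r => ?_
      show ENNReal.ofReal r.1 * _ = ENNReal.ofReal (r.1 ^ 1) * _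
      rw [pow_one]
    rw [hc0']
    exact hc₀lt

/-- for radially symmetric `u ∈ L^q(ℝ²)`, `q ∈ (2,4)`, the function
`V_u` is well defined away from the origin. -/
theorem stmt_18 (q : ℝ) (hq2 : 2 < q) (hq4 : q < 4) (u : E2 → ℝ) (f : ℝ → ℝ)
    (hu : MemLp u (ENNReal.ofReal q) (volume : Measure E2)) (hprof : HasProfile u f) :
    ∀ x : E2, x ≠ 0 →
      IntegrableOn (fun s => (hfun u s / s) * (f s) ^ 2) (Set.Ioi ‖x‖) volume := by
  intro x hx
  have hR0 : 0 < ‖x‖ := norm_pos_iff.mpr hx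
  set R := ‖x‖ with hR
  have hq0 : 0 < q := by linarith
  obtain ⟨D, hDtop, hDb⟩ := hfun_bound hq2 u hu
  obtain ⟨hψm, hc₁⟩ := profile_facts hq0 u f hu hprof
  have hmeas_h : Measurable (hfun u) := hfun_measurable hq2.le u hu
  have hψR : AEMeasurable (fun s => ENNReal.ofReal (f s ^ 2)) (volume.restrict (Ioi R)) := by
    have h1 := hψm.restrict (s := Ioi R)
    rwa [Measure.restrict_restrict measurableSet_Ioi,
      inter_eq_left.mpr (Ioi_subset_Ioi hR0.le)] at h1
  have hf2 : AEMeasurable (fun s => f s ^ 2) (volume.restrict (Ioi R)) := by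
    have h1 := ENNReal.measurable_toReal.comp_aemeasurable hψR
    exact h1.congr (ae_of_all _ fun s => ENNReal.toReal_ofReal (sq_nonneg _))
  have hasm : AEStronglyMeasurable (fun s => (hfun u s / s) * f s ^ 2)
      (volume.restrict (Ioi R)) :=
    ((hmeas_h.div measurable_id).aemeasurable.mul hf2).aestronglyMeasurable
  refine ⟨hasm, ?_⟩
  show (∫⁻ s in Ioi R, ‖(hfun u s / s) * f s ^ 2‖₊ ∂volume) < ⊤
  -- Hölder data
  have hq2' : (0:ℝ) < q - 2 := by linarith
  have hconj : ((q/2) : ℝ).HolderConjugate (q/(q-2)) := by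
    rw [Real.holderConjugate_iff]
    constructor
    · linarith
    · rw [inv_div, inv_div]
      field_simp
      ring
  set A₁ : ℝ → ℝ≥0∞ := fun s => ENNReal.ofReal (s ^ ((2:ℝ)/q)) * ENNReal.ofReal (f s ^ 2)
    with hA₁
  set B₁ : ℝ → ℝ≥0∞ := fun s => ENNReal.ofReal (s ^ ((1:ℝ) - 6/q)) with hB₁
  have hA₁m : AEMeasurable A₁ (volume.restrict (Ioi R)) :=
    ((by fun_prop : Measurable fun s:ℝ => s ^ ((2:ℝ)/q)).ennreal_ofReal).aemeasurable.mul hψR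
  have hB₁m : AEMeasurable B₁ (volume.restrict (Ioi R)) :=
    ((by fun_prop : Measurable fun s:ℝ => s ^ ((1:ℝ) - 6/q)).ennreal_ofReal).aemeasurable
  have hHold := ENNReal.lintegral_mul_le_Lp_mul_Lq (volume.restrict (Ioi R)) hconj hA₁m hB₁m
  simp only [Pi.mul_apply] at hHold
  -- first factor finite
  have hfac1 : (∫⁻ s in Ioi R, A₁ s ^ (q/2) ∂volume) < ⊤ := by
    have heq : ∀ s ∈ Ioi R, A₁ s ^ (q/2)
        = ENNReal.ofReal s * ENNReal.ofReal (f s ^ 2) ^ (q/2) := by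
      intro s hs
      have hs0 : 0 < s := lt_trans hR0 hs
      rw [hA₁]
      rw [ENNReal.mul_rpow_of_nonneg _ _ (by positivity),
        ENNReal.ofReal_rpow_of_nonneg (Real.rpow_nonneg hs0.le _) (by positivity),
        ← Real.rpow_mul hs0.le]
      rw [show (2:ℝ)/q * (q/2) = 1 by field_simp]
      rw [Real.rpow_one]
    rw [setLIntegral_congr_fun measurableSet_Ioi heq]
    exact lt_of_le_of_lt (lintegral_mono_set (Ioi_subset_Ioi hR0.le)) hc₁
  -- second factor finite
  have hfac2 : (∫⁻ s in Ioi R, B₁ s ^ (q/(q-2)) ∂volume) < ⊤ := by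
    have ha : ((1:ℝ) - 6/q) * (q/(q-2)) < -1 := by
      rw [show ((1:ℝ) - 6/q) * (q/(q-2)) = (q-6)/(q-2) by field_simp]
      rw [div_lt_iff₀ hq2']
      linarith
    have heq : ∀ s ∈ Ioi R, B₁ s ^ (q/(q-2))
        = ENNReal.ofReal (s ^ (((1:ℝ) - 6/q) * (q/(q-2)))) := by
      intro s hs
      have hs0 : 0 < s := lt_trans hR0 hs
      rw [hB₁, ENNReal.ofReal_rpow_of_nonneg (Real.rpow_nonneg hs0.le _)
        (by positivity), ← Real.rpow_mul hs0.le]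
    rw [setLIntegral_congr_fun measurableSet_Ioi heq]
    refine lt_of_le_of_lt (lintegral_mono fun s => Real.ofReal_le_enorm _) ?_
    exact (integrableOn_Ioi_rpow_of_lt ha hR0).hasFiniteIntegral
  -- main bound
  calc (∫⁻ s in Ioi R, ‖(hfun u s / s) * f s ^ 2‖₊ ∂volume)
      ≤ ∫⁻ s in Ioi R, D * (A₁ s * B₁ s) ∂volume := by
        refine lintegral_mono_ae ?_
        filter_upwards [ae_restrict_mem measurableSet_Ioi] with s hs
        have hs0 : 0 < s := lt_trans hR0 hs
        have hh0 : 0 ≤ hfun u s := hfun_nonneg u s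
        have e1 : (‖(hfun u s / s) * f s ^ 2‖₊ : ℝ≥0∞)
            = ENNReal.ofReal (hfun u s / s) * ENNReal.ofReal (f s ^ 2) := by
          rw [← enorm_eq_nnnorm, Real.enorm_eq_ofReal (mul_nonneg (div_nonneg hh0 hs0.le) (sq_nonneg _)),
            ENNReal.ofReal_mul (div_nonneg hh0 hs0.le)]
        have e3 : s ^ ((2:ℝ) - 4/q) / s = s ^ ((2:ℝ)/q) * s ^ ((1:ℝ) - 6/q) := by
          rw [← Real.rpow_add hs0]
          rw [show (2:ℝ)/q + (1 - 6/q) = (2 - 4/q) - 1 by ring]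
          rw [Real.rpow_sub hs0 (2 - 4/q) 1, Real.rpow_one]
        have e2 : ENNReal.ofReal (hfun u s / s)
            ≤ D * ENNReal.ofReal (s ^ ((2:ℝ) - 4/q) / s) := by
          rw [ENNReal.ofReal_div_of_pos hs0, ENNReal.ofReal_div_of_pos hs0, ← mul_div_assoc]
          exact ENNReal.div_le_div_right (hDb s hs0) _
        rw [e1]
        refine le_trans (mul_le_mul_left e2 _) (le_of_eq ?_)
        rw [e3, ENNReal.ofReal_mul (Real.rpow_nonneg hs0.le _), hA₁, hB₁]
        ring
    _ = D * ∫⁻ s in Ioi R, A₁ s * B₁ s ∂volume := lintegral_const_mul' _ _ hDtop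
    _ ≤ D * ((∫⁻ s in Ioi R, A₁ s ^ (q/2) ∂volume) ^ (1/(q/2))
          * (∫⁻ s in Ioi R, B₁ s ^ (q/(q-2)) ∂volume) ^ (1/(q/(q-2)))) :=
        mul_le_mul_right hHold _
    _ < ⊤ := by
        refine ENNReal.mul_lt_top hDtop.lt_top ?_
        exact ENNReal.mul_lt_top
          (ENNReal.rpow_lt_top_of_nonneg (by positivity) hfac1.ne).ne.lt_top
          (ENNReal.rpow_lt_top_of_nonneg (by positivity) hfac2.ne).ne.lt_top
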